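/- arXiv:1601.05638 — 5 statements merged into one kernel-verified Lean document; each statement's English description precedes it below -/
import Mathlib

section
/- Let N be a positive integer, Δ > 0 a real number, and L = NΔ. For all Ω, Ω' ∈ [−1, 1], the sum I₁(Ω,Ω') = ∑_{k=0}^{N−1} f_{L,Δ}(k/L − Ω) · conj(f_{L,Δ}(k/L − Ω')) equals f_{L,Δ}(Ω' − Ω); in particular |I₁(Ω,Ω')| ≤ 1. -/
/-!
Sampling at the grid points `k / L` turns `f_{L,Δ}(k/L - Ω)` into `1/N` times the discrete Fourier
transform, with respect to the primitive `N`-th root of unity `ζ = exp(2πi/N)`, of the sequence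
`n ↦ exp(2πinΔΩ)`. The sum `I₁(Ω, Ω')` is then Plancherel's identity for that transform, which rests
on the orthogonality `∑_{k<N} (ζ^m / ζ^n)^k = N δ_{nm}` for `n, m < N`; the result is again an
average of `N` unimodular terms, namely `f_{L,Δ}(Ω' - Ω)`.
-/

open Complex Finset

/-- `f_{L,Δ}(Ω) = (Δ/L) ∑_{n=0}^{N-1} exp(-2π i n Δ Ω)` with `L = N Δ`. -/
noncomputable def fLD (N : ℕ) (Δ : ℝ) (Ω : ℝ) : ℂ :=
  ((Δ / ((N : ℝ) * Δ) : ℝ) : ℂ) *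
    ∑ n ∈ Finset.range N,
      Complex.exp ((-2 : ℂ) * (Real.pi : ℂ) * Complex.I * (n : ℂ) * (Δ : ℂ) * (Ω : ℂ))

namespace IsPrimitiveRoot

variable {K : Type*} [Field K] {ζ : K} {N : ℕ}

theorem geom_sum_pow_div_pow (hζ : IsPrimitiveRoot ζ N) {n m : ℕ} (hn : n < N) (hm : m < N) :
    ∑ k ∈ range N, (ζ ^ n / ζ ^ m) ^ k = if n = m then (N : K) else 0 := by
  have hζ0 : ζ ≠ 0 := hζ.ne_zero (by omega)
  split_ifs with hnm
  · simp [hnm, hζ0]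
  have hne : ζ ^ n / ζ ^ m ≠ 1 := fun h ↦
    hnm (hζ.pow_inj hn hm ((div_eq_one_iff_eq (pow_ne_zero m hζ0)).mp h))
  have hpow : (ζ ^ n / ζ ^ m) ^ N = 1 := by
    rw [div_pow, ← pow_mul, ← pow_mul, mul_comm n, mul_comm m, pow_mul, pow_mul, hζ.pow_eq_one,
      one_pow, one_pow, div_one]
  rw [geom_sum_eq hne, hpow, sub_self, zero_div]

theorem sum_sum_inv_pow_mul_sum_pow (hζ : IsPrimitiveRoot ζ N) (a b : ℕ → K) :
    ∑ k ∈ range N, (∑ n ∈ range N, a n * ζ⁻¹ ^ (n * k)) * ∑ m ∈ range N, b m * ζ ^ (m * k) =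
      N * ∑ n ∈ range N, a n * b n := by
  calc _ = ∑ n ∈ range N, ∑ m ∈ range N, a n * b m * ∑ k ∈ range N, (ζ ^ m / ζ ^ n) ^ k := by
        simp_rw [sum_mul_sum, mul_sum]
        rw [sum_comm]
        refine sum_congr rfl fun n _ ↦ ?_
        rw [sum_comm]
        refine sum_congr rfl fun m _ ↦ sum_congr rfl fun k _ ↦ ?_
        rw [div_pow, ← pow_mul, ← pow_mul, inv_pow, div_eq_mul_inv]
        ring
    _ = _ := by
        rw [mul_sum]
        refine sum_congr rfl fun n hn ↦ ?_
        rw [sum_congr rfl fun m hm ↦ by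
          rw [hζ.geom_sum_pow_div_pow (mem_range.mp hm) (mem_range.mp hn), mul_ite, mul_zero]]
        rw [sum_ite_eq', if_pos hn]
        ring

end IsPrimitiveRoot

open Real ComplexConjugate

section
variable {N : ℕ} {Δ : ℝ}

theorem fLD_eq_inv_mul_sum (hΔ : Δ ≠ 0) (x : ℝ) :
    fLD N Δ x = (N : ℂ)⁻¹ * ∑ n ∈ range N, exp (-2 * π * I * n * Δ * x) := by
  rw [fLD, div_mul_cancel_right₀ hΔ, ofReal_inv, ofReal_natCast]

theorem norm_fLD_le (hΔ : Δ ≠ 0) (x : ℝ) : ‖fLD N Δ x‖ ≤ 1 := by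
  have hterm (n : ℕ) : ‖exp (-2 * π * I * n * Δ * x)‖ = 1 := by
    rw [show -2 * π * I * n * Δ * x = ((-2 * π * n * Δ * x : ℝ) : ℂ) * I by push_cast; ring,
      norm_exp_ofReal_mul_I]
  calc ‖fLD N Δ x‖ ≤ (N : ℝ)⁻¹ * ∑ n ∈ range N, ‖exp (-2 * π * I * n * Δ * x)‖ := by
        rw [fLD_eq_inv_mul_sum hΔ, norm_mul, norm_inv, Complex.norm_natCast]
        gcongr
        exact norm_sum_le _ _
    _ ≤ 1 := by
        simp only [hterm, sum_const, card_range, nsmul_eq_mul, mul_one]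
        exact inv_mul_le_one_of_le₀ le_rfl (Nat.cast_nonneg N)

theorem fLD_natCast_div_sub (hN : N ≠ 0) (hΔ : Δ ≠ 0) (k : ℕ) (t : ℝ) :
    fLD N Δ (k / (N * Δ) - t) =
      (N : ℂ)⁻¹ *
        ∑ n ∈ range N, exp (2 * π * I * n * Δ * t) * (exp (2 * π * I / N))⁻¹ ^ (n * k) := by
  have hΔ' : (Δ : ℂ) ≠ 0 := ofReal_ne_zero.mpr hΔ
  rw [fLD_eq_inv_mul_sum hΔ]
  congr 1
  refine sum_congr rfl fun n _ ↦ ?_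
  rw [← Complex.exp_neg, ← Complex.exp_nat_mul, ← Complex.exp_add]
  congr 1
  push_cast
  field_simp
  ring

theorem conj_fLD_natCast_div_sub (hN : N ≠ 0) (hΔ : Δ ≠ 0) (k : ℕ) (t : ℝ) :
    conj (fLD N Δ (k / (N * Δ) - t)) =
      (N : ℂ)⁻¹ *
        ∑ n ∈ range N, exp (-2 * π * I * n * Δ * t) * exp (2 * π * I / N) ^ (n * k) := by
  rw [fLD_natCast_div_sub hN hΔ]
  simp only [map_mul, map_sum, map_inv₀, map_pow, map_natCast, ← Complex.exp_conj,
    ← Complex.exp_neg]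
  simp only [map_neg, map_mul, map_div₀, map_ofNat, map_natCast, conj_ofReal, conj_I]
  congr 1
  refine sum_congr rfl fun n _ ↦ ?_
  ring_nf

theorem sum_fLD_mul_conj_fLD (hN : N ≠ 0) (hΔ : Δ ≠ 0) (Ω Ω' : ℝ) :
    ∑ k ∈ range N, fLD N Δ (k / (N * Δ) - Ω) * conj (fLD N Δ (k / (N * Δ) - Ω')) =
      fLD N Δ (Ω' - Ω) := by
  have hN₀ : (N : ℂ) ≠ 0 := Nat.cast_ne_zero.mpr hN
  simp_rw [conj_fLD_natCast_div_sub hN hΔ, fLD_natCast_div_sub hN hΔ, mul_mul_mul_comm, ← mul_sum,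
    (isPrimitiveRoot_exp N hN).sum_sum_inv_pow_mul_sum_pow, fLD_eq_inv_mul_sum hΔ,
    ← Complex.exp_add]
  field_simp
  refine sum_congr rfl fun n _ ↦ ?_
  push_cast
  ring_nf

end

theorem I1_eq_and_bound_general (N : ℕ) (hN : 0 < N) (Δ : ℝ) (hΔ : 0 < Δ)
    (Ω Ω' : ℝ) :
    (∑ k ∈ Finset.range N,
        fLD N Δ ((k : ℝ) / ((N : ℝ) * Δ) - Ω) *
          (starRingEnd ℂ) (fLD N Δ ((k : ℝ) / ((N : ℝ) * Δ) - Ω'))) =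
      fLD N Δ (Ω' - Ω) ∧
    ‖(∑ k ∈ Finset.range N,
        fLD N Δ ((k : ℝ) / ((N : ℝ) * Δ) - Ω) *
          (starRingEnd ℂ) (fLD N Δ ((k : ℝ) / ((N : ℝ) * Δ) - Ω')))‖ ≤ 1 := by
  have hI₁ := sum_fLD_mul_conj_fLD hN.ne' hΔ.ne' Ω Ω'
  exact ⟨hI₁, hI₁ ▸ norm_fLD_le hΔ.ne' _⟩

/-- For `L = N Δ` and `Ω, Ω' ∈ [-1,1]`, the sum
`I₁(Ω,Ω') = ∑_{k=0}^{N-1} f_{L,Δ}(k/L - Ω) conj(f_{L,Δ}(k/L - Ω'))` equals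
`f_{L,Δ}(Ω' - Ω)`; in particular `|I₁(Ω,Ω')| ≤ 1`. -/
theorem I1_eq_and_bound (N : ℕ) (hN : 0 < N) (Δ : ℝ) (hΔ : 0 < Δ)
    (Ω Ω' : ℝ) (hΩ : Ω ∈ Set.Icc (-1 : ℝ) 1) (hΩ' : Ω' ∈ Set.Icc (-1 : ℝ) 1) :
    (∑ k ∈ Finset.range N,
        fLD N Δ ((k : ℝ) / ((N : ℝ) * Δ) - Ω) *
          (starRingEnd ℂ) (fLD N Δ ((k : ℝ) / ((N : ℝ) * Δ) - Ω'))) =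
      fLD N Δ (Ω' - Ω) ∧
    ‖(∑ k ∈ Finset.range N,
        fLD N Δ ((k : ℝ) / ((N : ℝ) * Δ) - Ω) *
          (starRingEnd ℂ) (fLD N Δ ((k : ℝ) / ((N : ℝ) * Δ) - Ω')))‖ ≤ 1 :=
  I1_eq_and_bound_general N hN Δ hΔ Ω Ω'
end

section
/- For every positive integer n, the partial sum of the Basel series satisfies the strict two-sided bound (π²/6) · 2n(2n−1)/(2n+1)² < ∑_{k=1}^{n} 1/k² < (π²/6) · 2n(2n+2)/(2n+1)². -/
/-! The tail `π²/6 - ∑_{k ≤ n} 1/k² = ∑_{k > n} 1/k²` lies strictly between the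
telescoping sums `∑_{k > n} 1/(k(k+1)) = 1/(n+1)` and `∑_{k > n} 1/((k-1)k) = 1/n`.
Both stated bounds are weaker than the resulting
`π²/6 - 1/n < ∑_{k ≤ n} 1/k² < π²/6 - 1/(n+1)`, because `3/2 < π²/6 < 8/3`. -/

open Finset Filter Topology

theorem hasSum_sub_succ_of_antitone {f : ℕ → ℝ} (hf : Antitone f)
    (hf0 : Tendsto f atTop (𝓝 0)) :
    HasSum (fun i => f i - f (i + 1)) (f 0) := by
  rw [hasSum_iff_tendsto_nat_of_nonneg (fun i => sub_nonneg.2 (hf i.le_succ))]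
  simp only [sum_range_sub']
  simpa using tendsto_const_nhds.sub hf0

theorem hasSum_one_div_add_sub_one_div_add_one {a : ℝ} (ha : 0 < a) :
    HasSum (fun i : ℕ => 1 / ((i : ℝ) + a) - 1 / ((i : ℝ) + a + 1)) (1 / a) := by
  have hanti : Antitone fun i : ℕ => 1 / ((i : ℝ) + a) := fun i j hij =>
    one_div_le_one_div_of_le (by positivity) (by gcongr)
  have hlim : Tendsto (fun i : ℕ => 1 / ((i : ℝ) + a)) atTop (𝓝 0) := by
    simp only [one_div]
    exact (tendsto_natCast_atTop_atTop.atTop_add tendsto_const_nhds).inv_tendsto_atTop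
  simpa [add_right_comm _ (1 : ℝ)] using hasSum_sub_succ_of_antitone hanti hlim

theorem one_div_sub_one_div_add_one_lt_one_div_sq {x : ℝ} (hx : 0 < x) :
    1 / x - 1 / (x + 1) < 1 / x ^ 2 := by
  rw [div_sub_div _ _ hx.ne' (by positivity), div_lt_div_iff₀ (by positivity) (by positivity)]
  nlinarith

theorem one_div_sq_lt_one_div_sub_one_sub_one_div {x : ℝ} (hx : 1 < x) :
    1 / x ^ 2 < 1 / (x - 1) - 1 / x := by
  have hx' : 0 < x - 1 := sub_pos.2 hx
  rw [div_sub_div _ _ hx'.ne' (by positivity), div_lt_div_iff₀ (by positivity) (by positivity)]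
  nlinarith

theorem one_div_lt_of_hasSum_one_div_add_sq {a T : ℝ} (ha : 0 < a)
    (hT : HasSum (fun i : ℕ => 1 / ((i : ℝ) + a) ^ 2) T) : 1 / a < T := by
  have hlt (i : ℕ) :=
    one_div_sub_one_div_add_one_lt_one_div_sq (x := (i : ℝ) + a) (by positivity)
  exact hasSum_lt (fun i => (hlt i).le) (hlt 0) (hasSum_one_div_add_sub_one_div_add_one ha) hT

theorem lt_one_div_sub_one_of_hasSum_one_div_add_sq {a T : ℝ} (ha : 1 < a)
    (hT : HasSum (fun i : ℕ => 1 / ((i : ℝ) + a) ^ 2) T) : T < 1 / (a - 1) := by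
  have htele := hasSum_one_div_add_sub_one_div_add_one (sub_pos.2 ha)
  simp only [← add_sub_assoc, sub_add_cancel] at htele
  have hlt (i : ℕ) := one_div_sq_lt_one_div_sub_one_sub_one_div (x := (i : ℝ) + a)
    (by linarith [(i.cast_nonneg : (0 : ℝ) ≤ i)])
  exact hasSum_lt (fun i => (hlt i).le) (hlt 0) hT htele

theorem sum_range_succ_eq_sum_Icc_one {M : Type*} [AddCommMonoid M] {f : ℕ → M} (hf : f 0 = 0)
    (n : ℕ) : ∑ k ∈ range (n + 1), f k = ∑ k ∈ Icc 1 n, f k := by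
  rw [range_eq_Ico, sum_eq_sum_Ico_succ_bot (by omega : 0 < n + 1), hf, zero_add, zero_add,
    Ico_add_one_right_eq_Icc]

theorem hasSum_basel_tail (n : ℕ) :
    HasSum (fun i : ℕ => 1 / ((i : ℝ) + (n + 1)) ^ 2)
      (Real.pi ^ 2 / 6 - ∑ k ∈ Icc 1 n, (1 : ℝ) / (k : ℝ) ^ 2) := by
  rw [← sum_range_succ_eq_sum_Icc_one (f := fun k : ℕ => (1 : ℝ) / (k : ℝ) ^ 2) (by simp)]
  exact_mod_cast (hasSum_nat_add_iff' (n + 1)).2 hasSum_zeta_two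

/-- Two-sided strict bound on the partial sums of the Basel
series: `(π²/6)·2n(2n-1)/(2n+1)² < ∑_{k=1}^n 1/k² < (π²/6)·2n(2n+2)/(2n+1)²`. -/
theorem basel_partial_sum_bounds (n : ℕ) (hn : 0 < n) :
    Real.pi ^ 2 / 6 * (2 * (n : ℝ) * (2 * (n : ℝ) - 1) / (2 * (n : ℝ) + 1) ^ 2) <
        ∑ k ∈ Finset.Icc 1 n, (1 : ℝ) / (k : ℝ) ^ 2 ∧
      ∑ k ∈ Finset.Icc 1 n, (1 : ℝ) / (k : ℝ) ^ 2 <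
        Real.pi ^ 2 / 6 * (2 * (n : ℝ) * (2 * (n : ℝ) + 2) / (2 * (n : ℝ) + 1) ^ 2) := by
  have hn1 : (1 : ℝ) ≤ n := by exact_mod_cast hn
  have hZ_lo : 3 / 2 < Real.pi ^ 2 / 6 := by nlinarith [Real.pi_gt_three]
  have hZ_hi : Real.pi ^ 2 / 6 < 8 / 3 := by nlinarith [Real.pi_gt_three, Real.pi_lt_four]
  have htail := hasSum_basel_tail n
  have htail_lo := one_div_lt_of_hasSum_one_div_add_sq (by positivity) htail
  have htail_hi := lt_one_div_sub_one_of_hasSum_one_div_add_sq (by linarith) htail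
  rw [add_sub_cancel_right] at htail_hi
  set S := ∑ k ∈ Finset.Icc 1 n, (1 : ℝ) / (k : ℝ) ^ 2
  set Z := Real.pi ^ 2 / 6
  constructor
  · calc Z * (2 * n * (2 * n - 1) / (2 * n + 1) ^ 2)
          = Z - 1 / n - (Z * (6 * n + 1) * n - (2 * n + 1) ^ 2) / (n * (2 * n + 1) ^ 2) := by
            field_simp; ring
      _ ≤ Z - 1 / n := by
            have : 0 ≤ Z * (6 * n + 1) * n - (2 * n + 1) ^ 2 := by
              nlinarith [mul_le_mul_of_nonneg_left hn1 (sub_pos.2 hZ_lo).le]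
            linarith [div_nonneg this (by positivity : (0 : ℝ) ≤ n * (2 * n + 1) ^ 2)]
      _ < S := by linarith
  · calc S < Z - 1 / (n + 1) := by linarith
      _ ≤ Z - 1 / (n + 1) + ((2 * n + 1) ^ 2 - Z * (n + 1)) / ((n + 1) * (2 * n + 1) ^ 2) := by
            have : 0 ≤ (2 * n + 1) ^ 2 - Z * (n + 1) := by nlinarith
            linarith [div_nonneg this (by positivity : (0 : ℝ) ≤ (n + 1) * (2 * n + 1) ^ 2)]
      _ = Z * (2 * n * (2 * n + 2) / (2 * n + 1) ^ 2) := by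
            field_simp; ring
end

section
/- For every natural number n and every real x with sin x ≠ 0, the identity sin((2n+1)x)/(sin x)^{2n+1} = ∑_{r=0}^{n} (−1)^r · C(2n+1, 2r+1) · (cot x)^{2(n−r)} holds, where C(·,·) denotes the binomial coefficient and cot x = cos x / sin x. -/
/-!
Since `cot x + i = e^{ix} / sin x`, the number `sin((2n+1)x) / sin^{2n+1} x` is the imaginary part
of `(cot x + i)^{2n+1}`; expanding binomially, only the odd powers of `i` contribute, and
`i^{2r+1} = (-1)^r i`.
-/

open Finset Complex

theorem Finset.sum_range_two_mul {M : Type*} [AddCommMonoid M] (f : ℕ → M) (n : ℕ) :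
    ∑ i ∈ range (2 * n), f i = ∑ i ∈ range n, (f (2 * i) + f (2 * i + 1)) := by
  induction n with
  | zero => simp
  | succ n ih => rw [mul_add_one, sum_range_succ, sum_range_succ, sum_range_succ, ih, add_assoc]

theorem Complex.im_add_mul_I_pow_two_mul_add_one (a b : ℝ) (n : ℕ) :
    (((a : ℂ) + b * I) ^ (2 * n + 1)).im =
      ∑ r ∈ range (n + 1), (-1) ^ r * ((2 * n + 1).choose (2 * r + 1) : ℝ) *
        a ^ (2 * (n - r)) * b ^ (2 * r + 1) := by
  rw [add_comm, add_pow, im_sum, show 2 * n + 1 + 1 = 2 * (n + 1) by ring, sum_range_two_mul]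
  refine sum_congr rfl fun r hr => ?_
  have hexp : 2 * n + 1 - (2 * r + 1) = 2 * (n - r) := by grind
  have heven : (b * I) ^ (2 * r) = ((-b ^ 2) ^ r : ℝ) := by
    push_cast; rw [pow_mul, mul_pow, I_sq]; ring
  rw [pow_succ, heven, hexp]
  simp only [← ofReal_pow, ← ofReal_natCast]
  simp only [mul_im, mul_re, ofReal_re, ofReal_im, I_re, I_im]
  ring

theorem Real.sin_nat_mul_eq_im_pow (n : ℕ) (x : ℝ) :
    Real.sin (n * x) = (((Real.cos x : ℂ) + Real.sin x * I) ^ n).im := by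
  rw [← exp_ofReal_mul_I, ← Complex.exp_nat_mul, ← mul_assoc, ← ofReal_natCast, ← ofReal_mul,
    exp_ofReal_mul_I_im]

/-- For every natural `n` and every real `x` with `sin x ≠ 0`,
`sin((2n+1)x)/(sin x)^{2n+1} = ∑_{r=0}^n (-1)^r C(2n+1, 2r+1) (cot x)^{2(n-r)}`. -/
theorem sin_odd_multiple_expansion (n : ℕ) (x : ℝ) (hx : Real.sin x ≠ 0) :
    Real.sin ((2 * (n : ℝ) + 1) * x) / Real.sin x ^ (2 * n + 1) =
      ∑ r ∈ Finset.range (n + 1),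
        (-1 : ℝ) ^ r * (Nat.choose (2 * n + 1) (2 * r + 1) : ℝ) *
          (Real.cos x / Real.sin x) ^ (2 * (n - r)) := by
  have hcot : ((Real.cos x / Real.sin x : ℝ) : ℂ) + (1 : ℝ) * I =
      ((Real.cos x : ℂ) + Real.sin x * I) / (Real.sin x : ℝ) := by
    rw [add_div, mul_div_right_comm, div_self (ofReal_ne_zero.mpr hx)]; push_cast; ring
  calc Real.sin ((2 * (n : ℝ) + 1) * x) / Real.sin x ^ (2 * n + 1)
      = (((Real.cos x : ℂ) + Real.sin x * I) ^ (2 * n + 1)).im / Real.sin x ^ (2 * n + 1) := by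
        rw [← Real.sin_nat_mul_eq_im_pow]; push_cast; rfl
    _ = ((((Real.cos x / Real.sin x : ℝ) : ℂ) + (1 : ℝ) * I) ^ (2 * n + 1)).im := by
        rw [hcot, div_pow, ← ofReal_pow, div_ofReal_im]
    _ = _ := by simp only [im_add_mul_I_pow_two_mul_add_one, one_pow, mul_one]
end

section
/- Let (A_t) and (B_t) be sequences of N_t×N_t positive semidefinite Hermitian complex matrices with N_t → ∞. Suppose there is a constant C such that the operator norms satisfy ‖A_t‖ ≤ C and ‖B_t‖ ≤ C for all t, and that the normalized Frobenius norm ‖A_t − B_t‖_F = √(Tr((A_t−B_t)(A_t−B_t)^H)/N_t) tends to zero as t → ∞. Then for every continuous function ψ : ℝ → ℝ, (1/N_t) · ( ∑_{n=0}^{N_t−1} ψ(λ_n(A_t)) − ∑_{n=0}^{N_t−1} ψ(λ_n(B_t)) ) → 0 as t → ∞, where λ_0(·), …, λ_{N_t−1}(·) denote the (real, nonnegative) eigenvalues counted with multiplicity. -/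
open Matrix Filter
open scoped ComplexOrder

/-- The Euclidean norm of a complex vector. -/
noncomputable def eNorm {n : ℕ} (v : Fin n → ℂ) : ℝ :=
  Real.sqrt (∑ i, ‖v i‖ ^ 2)

/-- The operator (spectral) norm of a complex matrix: the supremum of
`‖A v‖ / ‖v‖` over nonzero vectors `v`, with Euclidean norms. -/
noncomputable def opNorm {m n : ℕ} (A : Matrix (Fin m) (Fin n) ℂ) : ℝ :=
  sSup {c : ℝ | ∃ v : Fin n → ℂ, v ≠ 0 ∧ c = eNorm (A.mulVec v) / eNorm v}

/-- The Frobenius norm normalized by the number of rows: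
`‖A‖_F = √(Tr(A Aᴴ)/m) = √((∑_{i,j} |a_{ij}|²)/m)`. -/
noncomputable def frobNorm {m n : ℕ} (A : Matrix (Fin m) (Fin n) ℂ) : ℝ :=
  Real.sqrt ((∑ i, ∑ j, ‖A i j‖ ^ 2) / m)

open scoped Matrix.Norms.L2Operator Topology

/-!
All eigenvalues lie in `[-C, C]`. For `ψ x = x ^ k` the eigenvalue sums are `tr (A ^ k)` and
`tr (B ^ k)`; writing `A ^ k - B ^ k = ∑ j < k, A ^ j (A - B) B ^ (k - 1 - j)` and using
`|tr (M D)| ≤ N ‖M‖ ‖D‖_F` gives `(1/N) |tr (A ^ k) - tr (B ^ k)| ≤ k C ^ (k - 1) ‖A - B‖_F → 0`.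
This passes to polynomials by linearity, and to continuous `ψ` by Weierstrass approximation on
`[-C, C]`: changing `ψ` by at most `ε` there changes the normalized difference by at most `2 ε`.
-/

lemma pow_sub_pow_eq_sum {R : Type*} [Ring R] (a b : R) (k : ℕ) :
    a ^ k - b ^ k = ∑ j ∈ Finset.range k, a ^ j * (a - b) * b ^ (k - 1 - j) := by
  have hstep : ∀ j ∈ Finset.range k, a ^ (j + 1) * b ^ (k - (j + 1)) - a ^ j * b ^ (k - j)
      = a ^ j * (a - b) * b ^ (k - 1 - j) := fun j hj => by
    obtain ⟨l, rfl⟩ : ∃ l, k = j + 1 + l := ⟨k - (j + 1), by grind⟩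
    rw [show j + 1 + l - (j + 1) = l by omega, show j + 1 + l - j = l + 1 by omega,
      show j + 1 + l - 1 - j = l by omega, pow_succ' b l]
    noncomm_ring
  rw [← Finset.sum_congr rfl hstep, Finset.sum_range_sub (fun j => a ^ j * b ^ (k - j))]
  simp

lemma eNorm_eq_norm {n : ℕ} (v : Fin n → ℂ) :
    eNorm v = ‖(EuclideanSpace.equiv (Fin n) ℂ).symm v‖ :=
  (EuclideanSpace.norm_eq _).symm

namespace Matrix

lemma l2_opNorm_le_opNorm {m n : ℕ} (A : Matrix (Fin m) (Fin n) ℂ) : ‖A‖ ≤ opNorm A := by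
  have hbdd : BddAbove {c : ℝ | ∃ v : Fin n → ℂ, v ≠ 0 ∧ c = eNorm (A *ᵥ v) / eNorm v} := by
    refine ⟨‖A‖, ?_⟩
    rintro _ ⟨v, -, rfl⟩
    rw [eNorm_eq_norm, eNorm_eq_norm]
    exact div_le_of_le_mul₀ (norm_nonneg _) (norm_nonneg _) (A.l2_opNorm_mulVec _)
  have hnonneg : 0 ≤ opNorm A := Real.sSup_nonneg fun _ ⟨_, _, hc⟩ =>
    hc ▸ div_nonneg (Real.sqrt_nonneg _) (Real.sqrt_nonneg _)
  rw [l2_opNorm_def]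
  refine ContinuousLinearMap.opNorm_le_bound' _ hnonneg fun x hx => ?_
  rw [← div_le_iff₀ (norm_pos_iff.mpr (norm_ne_zero_iff.mp hx))]
  refine le_csSup hbdd ⟨x.ofLp, fun h => hx (by simp [← WithLp.ofLp_eq_zero, h]), ?_⟩
  rw [eNorm_eq_norm, eNorm_eq_norm]
  rfl

lemma l2_opNorm_one_le {n : ℕ} : ‖(1 : Matrix (Fin n) (Fin n) ℂ)‖ ≤ 1 := by
  rw [← diagonal_one, l2_opNorm_diagonal]
  exact pi_norm_le_iff_of_nonneg zero_le_one |>.mpr fun _ => by simp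

lemma l2_opNorm_pow_le {n : ℕ} {A : Matrix (Fin n) (Fin n) ℂ} {C : ℝ} (hA : ‖A‖ ≤ C) (k : ℕ) :
    ‖A ^ k‖ ≤ C ^ k := by
  induction k with
  | zero => simpa using l2_opNorm_one_le
  | succ k ih =>
    rw [pow_succ, pow_succ]
    exact (l2_opNorm_mul _ _).trans (mul_le_mul ih hA (norm_nonneg _) ((norm_nonneg _).trans ih))

lemma IsHermitian.abs_eigenvalues_le {n : ℕ} {A : Matrix (Fin n) (Fin n) ℂ}
    (hA : A.IsHermitian) (i : Fin n) : |hA.eigenvalues i| ≤ ‖A‖ := by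
  have h := A.l2_opNorm_mulVec (hA.eigenvectorBasis i)
  rw [hA.mulVec_eigenvectorBasis i, hA.eigenvectorBasis.orthonormal.1 i] at h
  simpa [norm_smul] using h

lemma IsHermitian.trace_pow {n : ℕ} {A : Matrix (Fin n) (Fin n) ℂ}
    (hA : A.IsHermitian) (k : ℕ) : (A ^ k).trace = ∑ i, (hA.eigenvalues i : ℂ) ^ k := by
  conv_lhs => rw [hA.spectral_theorem, ← map_pow, Unitary.conjStarAlgAut_apply, trace_mul_cycle,
    Unitary.coe_star_mul_self, one_mul, diagonal_pow, trace_diagonal]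
  simp

lemma mul_frobNorm_eq_sqrt {n : ℕ} (D : Matrix (Fin n) (Fin n) ℂ) :
    n * frobNorm D = √(n * ∑ i, ∑ j, ‖D i j‖ ^ 2) := by
  rcases Nat.eq_zero_or_pos n with rfl | hn
  · simp
  have hn' : (0 : ℝ) < n := Nat.cast_pos.mpr hn
  have hsq : (n : ℝ) * ∑ i, ∑ j, ‖D i j‖ ^ 2 = n ^ 2 * ((∑ i, ∑ j, ‖D i j‖ ^ 2) / n) := by
    field_simp
  rw [hsq, Real.sqrt_mul (sq_nonneg _), Real.sqrt_sq hn'.le, frobNorm]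

lemma norm_trace_mul_le {n : ℕ} (M D : Matrix (Fin n) (Fin n) ℂ) :
    ‖(M * D).trace‖ ≤ n * (‖M‖ * frobNorm D) := by
  let col : Fin n → EuclideanSpace ℂ (Fin n) := fun j => WithLp.toLp 2 (fun i => D i j)
  have hcol : ∑ j, ‖col j‖ ^ 2 = ∑ i, ∑ j, ‖D i j‖ ^ 2 := by
    simp only [col, EuclideanSpace.norm_sq_eq]
    exact Finset.sum_comm
  have hdiag : ∀ j, ‖(M * D) j j‖ ≤ ‖M‖ * ‖col j‖ := fun j =>
    calc ‖(M * D) j j‖ = ‖(EuclideanSpace.equiv (Fin n) ℂ).symm (M *ᵥ col j) j‖ := by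
          simp [col, mul_apply, mulVec, dotProduct]
      _ ≤ ‖M‖ * ‖col j‖ := (PiLp.norm_apply_le _ j).trans (M.l2_opNorm_mulVec _)
  calc ‖(M * D).trace‖ ≤ ∑ j, ‖M‖ * ‖col j‖ :=
        (norm_sum_le _ _).trans (Finset.sum_le_sum fun j _ => hdiag j)
    _ = ‖M‖ * ∑ j, ‖col j‖ := (Finset.mul_sum _ _ _).symm
    _ ≤ ‖M‖ * √(n * ∑ j, ‖col j‖ ^ 2) := by
        gcongr
        refine Real.le_sqrt_of_sq_le ?_
        simpa using sq_sum_le_card_mul_sum_sq (s := Finset.univ) (f := fun j => ‖col j‖)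
    _ = n * (‖M‖ * frobNorm D) := by
        rw [hcol, ← mul_frobNorm_eq_sqrt]; ring

lemma norm_trace_pow_sub_trace_pow_le {n : ℕ} {A B : Matrix (Fin n) (Fin n) ℂ} {C : ℝ}
    (hA : ‖A‖ ≤ C) (hB : ‖B‖ ≤ C) (k : ℕ) :
    ‖(A ^ k).trace - (B ^ k).trace‖ ≤ n * (k * C ^ (k - 1) * frobNorm (A - B)) := by
  have hterm : ∀ j ∈ Finset.range k,
      ‖(B ^ (k - 1 - j) * A ^ j * (A - B)).trace‖ ≤ n * (C ^ (k - 1) * frobNorm (A - B)) := by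
    intro j hj
    have hnorm : ‖B ^ (k - 1 - j) * A ^ j‖ ≤ C ^ (k - 1) := by
      calc ‖B ^ (k - 1 - j) * A ^ j‖ ≤ ‖B ^ (k - 1 - j)‖ * ‖A ^ j‖ := l2_opNorm_mul _ _
        _ ≤ C ^ (k - 1 - j) * C ^ j := mul_le_mul (l2_opNorm_pow_le hB _)
            (l2_opNorm_pow_le hA _) (norm_nonneg _) (pow_nonneg ((norm_nonneg _).trans hA) _)
        _ = C ^ (k - 1) := by
            rw [← pow_add, Nat.sub_add_cancel (Nat.le_sub_one_of_lt (Finset.mem_range.mp hj))]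
    refine (norm_trace_mul_le _ _).trans ?_
    gcongr
    exact Real.sqrt_nonneg _
  rw [← trace_sub, pow_sub_pow_eq_sum, trace_sum]
  calc ‖∑ j ∈ Finset.range k, (A ^ j * (A - B) * B ^ (k - 1 - j)).trace‖
      = ‖∑ j ∈ Finset.range k, (B ^ (k - 1 - j) * A ^ j * (A - B)).trace‖ := by
        simp only [trace_mul_cycle (A ^ _)]
    _ ≤ ∑ j ∈ Finset.range k, n * (C ^ (k - 1) * frobNorm (A - B)) :=
        (norm_sum_le _ _).trans (Finset.sum_le_sum hterm)
    _ = n * (k * C ^ (k - 1) * frobNorm (A - B)) := by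
        rw [Finset.sum_const, Finset.card_range, nsmul_eq_mul]; ring

end Matrix

noncomputable def meanDiff {n : ℕ} (x y : Fin n → ℝ) (f : ℝ → ℝ) : ℝ :=
  (1 / (n : ℝ)) * (∑ i, f (x i) - ∑ i, f (y i))

section meanDiff

variable {n : ℕ} (x y : Fin n → ℝ)

lemma meanDiff_sub (f g : ℝ → ℝ) : meanDiff x y (f - g) = meanDiff x y f - meanDiff x y g := by
  simp only [meanDiff, Pi.sub_apply, Finset.sum_sub_distrib]
  ring

lemma meanDiff_eval (p : Polynomial ℝ) :
    meanDiff x y (fun z => p.eval z)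
      = ∑ k ∈ Finset.range (p.natDegree + 1), p.coeff k * meanDiff x y (· ^ k) := by
  simp only [meanDiff, Polynomial.eval_eq_sum_range, Finset.mul_sum, ← Finset.sum_sub_distrib]
  rw [Finset.sum_comm]
  exact Finset.sum_congr rfl fun k _ => Finset.sum_congr rfl fun i _ => by ring

variable {x y}

lemma abs_meanDiff_le {s : Set ℝ} {f : ℝ → ℝ} {ε : ℝ} (hε : 0 ≤ ε)
    (hx : ∀ i, x i ∈ s) (hy : ∀ i, y i ∈ s) (hf : ∀ z ∈ s, |f z| ≤ ε) :
    |meanDiff x y f| ≤ 2 * ε := by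
  have hsum : ∀ v : Fin n → ℝ, (∀ i, v i ∈ s) → |∑ i, f (v i)| ≤ n * ε := fun v hv =>
    calc |∑ i, f (v i)| ≤ ∑ i, |f (v i)| := Finset.abs_sum_le_sum_abs _ _
      _ ≤ ∑ _i : Fin n, ε := Finset.sum_le_sum fun i _ => hf _ (hv i)
      _ = n * ε := by simp
  rcases Nat.eq_zero_or_pos n with rfl | hn
  · simp [meanDiff, hε]
  have hn' : (0 : ℝ) < n := Nat.cast_pos.mpr hn
  rw [meanDiff, abs_mul, abs_of_pos (by positivity), one_div, inv_mul_le_iff₀ hn']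
  linarith [abs_sub _ _ |>.trans (add_le_add (hsum x hx) (hsum y hy))]

end meanDiff

theorem tendsto_meanDiff_of_forall_pow {α : Type*} {l : Filter α} {N : α → ℕ}
    {x y : ∀ t, Fin (N t) → ℝ} {a b : ℝ}
    (hx : ∀ t i, x t i ∈ Set.Icc a b) (hy : ∀ t i, y t i ∈ Set.Icc a b)
    (hpow : ∀ k : ℕ, Tendsto (fun t => meanDiff (x t) (y t) (· ^ k)) l (𝓝 0))
    {ψ : ℝ → ℝ} (hψ : ContinuousOn ψ (Set.Icc a b)) :
    Tendsto (fun t => meanDiff (x t) (y t) ψ) l (𝓝 0) := by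
  have hpoly (p : Polynomial ℝ) :
      Tendsto (fun t => meanDiff (x t) (y t) (fun z => p.eval z)) l (𝓝 0) := by
    simp only [meanDiff_eval]
    simpa using tendsto_finsetSum _ fun k _ => (hpow k).const_mul (p.coeff k)
  refine Metric.tendsto_nhds.mpr fun ε hε => ?_
  obtain ⟨p, hp⟩ := exists_polynomial_near_of_continuousOn a b ψ hψ (ε / 3) (by positivity)
  filter_upwards [Metric.tendsto_nhds.mp (hpoly p) (ε / 3) (by positivity)] with t ht
  have happrox : |meanDiff (x t) (y t) (ψ - fun z => p.eval z)| ≤ 2 * (ε / 3) :=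
    abs_meanDiff_le (by positivity) (hx t) (hy t) fun z hz => by
      simpa [abs_sub_comm] using (hp z hz).le
  rw [meanDiff_sub] at happrox
  rw [Real.dist_eq, sub_zero] at ht ⊢
  linarith [abs_sub_abs_le_abs_sub (meanDiff (x t) (y t) ψ) (meanDiff (x t) (y t) (p.eval ·))]

lemma Matrix.IsHermitian.abs_meanDiff_eigenvalues_pow_le {n : ℕ}
    {A B : Matrix (Fin n) (Fin n) ℂ} (hA : A.IsHermitian) (hB : B.IsHermitian) {C : ℝ}
    (hAC : ‖A‖ ≤ C) (hBC : ‖B‖ ≤ C) (k : ℕ) :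
    |meanDiff hA.eigenvalues hB.eigenvalues (· ^ k)| ≤ k * C ^ (k - 1) * frobNorm (A - B) := by
  have hC : 0 ≤ C := (norm_nonneg _).trans hAC
  have htrace : ((∑ i, hA.eigenvalues i ^ k - ∑ i, hB.eigenvalues i ^ k : ℝ) : ℂ)
      = (A ^ k).trace - (B ^ k).trace := by
    rw [hA.trace_pow, hB.trace_pow]; push_cast; rfl
  have hsum : |∑ i, hA.eigenvalues i ^ k - ∑ i, hB.eigenvalues i ^ k|
      ≤ n * (k * C ^ (k - 1) * frobNorm (A - B)) := by
    rw [← Real.norm_eq_abs, ← Complex.norm_real, htrace]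
    exact norm_trace_pow_sub_trace_pow_le hAC hBC k
  rcases Nat.eq_zero_or_pos n with rfl | hn
  · simp only [meanDiff, CharP.cast_eq_zero, div_zero, zero_mul, abs_zero]
    exact mul_nonneg (by positivity) (Real.sqrt_nonneg _)
  rw [meanDiff, abs_mul, abs_of_pos (by positivity), one_div, inv_mul_le_iff₀ (by positivity)]
  exact hsum

theorem szego_asymptotically_equivalent_general
    (N : ℕ → ℕ)
    (A B : ∀ t, Matrix (Fin (N t)) (Fin (N t)) ℂ)
    (hA : ∀ t, (A t).PosSemidef) (hB : ∀ t, (B t).PosSemidef)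
    (hbdd : ∃ C : ℝ, ∀ t, opNorm (A t) ≤ C ∧ opNorm (B t) ≤ C)
    (hAB : Tendsto (fun t => frobNorm (A t - B t)) atTop (nhds 0))
    (ψ : ℝ → ℝ) (hψ : Continuous ψ) :
    Tendsto (fun t => (1 / (N t : ℝ)) *
        ((∑ n, ψ ((hA t).isHermitian.eigenvalues n)) -
          ∑ n, ψ ((hB t).isHermitian.eigenvalues n)))
      atTop (nhds 0) := by
  obtain ⟨C, hC⟩ := hbdd
  have hAC t : ‖A t‖ ≤ C := (l2_opNorm_le_opNorm _).trans (hC t).1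
  have hBC t : ‖B t‖ ≤ C := (l2_opNorm_le_opNorm _).trans (hC t).2
  have heig {n : ℕ} {M : Matrix (Fin n) (Fin n) ℂ} (hM : M.IsHermitian) (hMC : ‖M‖ ≤ C) i :
      hM.eigenvalues i ∈ Set.Icc (-C) C :=
    abs_le.mp ((hM.abs_eigenvalues_le i).trans hMC)
  refine tendsto_meanDiff_of_forall_pow (fun t => heig _ (hAC t)) (fun t => heig _ (hBC t))
    (fun k => ?_) hψ.continuousOn
  refine squeeze_zero_norm (fun t => ?_) (by simpa using hAB.const_mul (k * C ^ (k - 1)))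
  exact (hA t).isHermitian.abs_meanDiff_eigenvalues_pow_le (hB t).isHermitian (hAC t) (hBC t) k

/-- Szegő-type theorem for asymptotically equivalent
matrices. Let `(A_t)`, `(B_t)` be sequences of `N_t×N_t` positive semidefinite
Hermitian matrices with `N_t → ∞`, operator norms uniformly bounded by some
`C`, and `‖A_t − B_t‖_F → 0`. Then for every continuous `ψ : ℝ → ℝ`,
`(1/N_t)(∑_n ψ(λ_n(A_t)) − ∑_n ψ(λ_n(B_t))) → 0`. -/
theorem szego_asymptotically_equivalent
    (N : ℕ → ℕ) (hN : Tendsto (fun t => N t) atTop atTop)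
    (A B : ∀ t, Matrix (Fin (N t)) (Fin (N t)) ℂ)
    (hA : ∀ t, (A t).PosSemidef) (hB : ∀ t, (B t).PosSemidef)
    (hbdd : ∃ C : ℝ, ∀ t, opNorm (A t) ≤ C ∧ opNorm (B t) ≤ C)
    (hAB : Tendsto (fun t => frobNorm (A t - B t)) atTop (nhds 0))
    (ψ : ℝ → ℝ) (hψ : Continuous ψ) :
    Tendsto (fun t => (1 / (N t : ℝ)) *
        ((∑ n, ψ ((hA t).isHermitian.eigenvalues n)) -
          ∑ n, ψ ((hB t).isHermitian.eigenvalues n)))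
      atTop (nhds 0) :=
  szego_asymptotically_equivalent_general N A B hA hB hbdd hAB ψ hψ
end

section
/- Let (A_t) and (B_t) be sequences of N_t×N_t positive semidefinite Hermitian complex matrices with N_t → ∞, uniformly bounded operator norms, and normalized Frobenius norm ‖A_t − B_t‖_F → 0 as t → ∞. Then for every γ > 0, (1/N_t) · | log det(I + γ A_t) − log det(I + γ B_t) | → 0 as t → ∞, where I denotes the N_t×N_t identity matrix and the determinants are real and at least one. -/
open Matrix Filter
open scoped ComplexOrder

/-! Let `P ≥ 0` be the positive part of `A - B`, so `A ≤ B + P`. Conjugating by `M^{-1/2}`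
turns `det (M + S)` into `det M * det (1 + M^{-1/2} S M^{-1/2})`, whence `det M ≤ det (M + S)` for
`M > 0`, `S ≥ 0`, and `det (M + S) ≤ det M * exp (tr S)` when moreover `M ≥ 1`. Therefore
`det (1 + γA) ≤ det (1 + γA + γ(B + P - A)) = det (1 + γB + γP) ≤ det (1 + γB) * exp (γ tr P)`,
and `tr P ≤ ∑ |λᵢ(A - B)| ≤ √N ‖A - B‖_HS` by Cauchy–Schwarz. By symmetry the log-determinants
differ by at most `γ N ‖A - B‖_F`, so after division by `N` the difference tends to zero. -/

namespace Matrix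

open scoped MatrixOrder

variable {n 𝕜 : Type*} [Fintype n] [DecidableEq n] [RCLike 𝕜]

namespace IsHermitian

variable {A : Matrix n n 𝕜}

lemma det_cfc (hA : A.IsHermitian) (f : ℝ → ℝ) :
    (cfc f A).det = ∏ i, (f (hA.eigenvalues i) : 𝕜) := by
  rw [hA.cfc_eq, IsHermitian.cfc, Unitary.conjStarAlgAut_apply, det_mul_comm, ← mul_assoc,
    Unitary.coe_star_mul_self, one_mul, det_diagonal]
  rfl

lemma trace_cfc (hA : A.IsHermitian) (f : ℝ → ℝ) :
    (cfc f A).trace = ∑ i, (f (hA.eigenvalues i) : 𝕜) := by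
  rw [hA.cfc_eq, IsHermitian.cfc, Unitary.conjStarAlgAut_apply, trace_mul_cycle,
    Unitary.coe_star_mul_self, one_mul, trace_diagonal]
  rfl

lemma sum_eigenvalues_sq (hA : A.IsHermitian) :
    ∑ i, hA.eigenvalues i ^ 2 = ∑ i, ∑ j, ‖A i j‖ ^ 2 := by
  have hsq : A * A = cfc (fun x : ℝ => x ^ 2) A := by
    rw [cfc_pow _ 2 A, cfc_id' ℝ A, sq]
  have htr : (A * A).trace = ((∑ i, ∑ j, ‖A i j‖ ^ 2 : ℝ) : 𝕜) := by
    push_cast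
    refine Finset.sum_congr rfl fun i _ => Finset.sum_congr rfl fun j _ => ?_
    dsimp only
    rw [← hA.apply j i, RCLike.star_def, RCLike.mul_conj]
  rw [← RCLike.ofReal_inj (K := 𝕜), ← htr, hsq, hA.trace_cfc]
  push_cast
  rfl

lemma sum_abs_eigenvalues_le (hA : A.IsHermitian) :
    ∑ i, |hA.eigenvalues i| ≤
      √(Fintype.card n) * √(∑ i, ∑ j, ‖A i j‖ ^ 2) := by
  rw [← hA.sum_eigenvalues_sq, ← Real.sqrt_mul (Nat.cast_nonneg _),
    Real.le_sqrt (Finset.sum_nonneg fun i _ => abs_nonneg _) (by positivity)]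
  simpa using sq_sum_le_card_mul_sum_sq (s := Finset.univ) (f := fun i => |hA.eigenvalues i|)

end IsHermitian

namespace PosSemidef

variable {T : Matrix n n 𝕜}

lemma norm_det_one_add (hT : T.PosSemidef) :
    ‖(1 + T).det‖ = ∏ i, (1 + hT.1.eigenvalues i) := by
  have h : 1 + T = cfc (fun x : ℝ => 1 + x) T := by
    rw [cfc_const_add 1 _ T, cfc_id' ℝ T, map_one]
  rw [h, hT.1.det_cfc, ← RCLike.ofReal_prod, RCLike.norm_ofReal, abs_of_nonneg]
  exact Finset.prod_nonneg fun i _ => by linarith [hT.eigenvalues_nonneg i]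

lemma one_le_norm_det_one_add (hT : T.PosSemidef) : 1 ≤ ‖(1 + T).det‖ := by
  rw [hT.norm_det_one_add]
  exact Finset.one_le_prod fun i _ => by linarith [hT.eigenvalues_nonneg i]

lemma norm_det_one_add_le_exp_trace (hT : T.PosSemidef) :
    ‖(1 + T).det‖ ≤ Real.exp (RCLike.re T.trace) := by
  rw [hT.norm_det_one_add, hT.1.trace_eq_sum_eigenvalues, ← RCLike.ofReal_sum, RCLike.ofReal_re,
    Real.exp_sum]
  exact Finset.prod_le_prod (fun i _ => by linarith [hT.eigenvalues_nonneg i])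
    fun i _ => by linarith [Real.add_one_le_exp (hT.1.eigenvalues i)]

lemma trace_mul_nonneg {S : Matrix n n 𝕜} (hS : S.PosSemidef) (hT : T.PosSemidef) :
    0 ≤ (S * T).trace := by
  obtain ⟨W, hW, rfl⟩ : ∃ W : Matrix n n 𝕜, W.IsHermitian ∧ S = W * W :=
    ⟨CFC.sqrt S, (CFC.sqrt_nonneg S).posSemidef.1, (CFC.sqrt_mul_sqrt_self S hS.nonneg).symm⟩
  rw [mul_assoc, trace_mul_comm, mul_assoc]
  simpa [hW.eq, mul_assoc] using (hT.conjTranspose_mul_mul_same W).trace_nonneg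

end PosSemidef

lemma det_mul_self_add {R : Type*} [CommRing R] {Q : Matrix n n R} (hQ : IsUnit Q.det)
    (S : Matrix n n R) :
    (Q * Q + S).det = (Q * Q).det * (1 + Q⁻¹ * S * Q⁻¹).det := by
  have h : 1 + Q⁻¹ * S * Q⁻¹ = Q⁻¹ * (Q * Q + S) * Q⁻¹ := by
    rw [mul_add, add_mul, ← mul_assoc, nonsing_inv_mul Q hQ, one_mul, mul_nonsing_inv Q hQ]
  obtain ⟨u, hu⟩ := hQ
  rw [h, det_mul, det_mul, det_mul, det_nonsing_inv, ← hu, Ring.inverse_unit, mul_assoc,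
    mul_assoc, Units.mul_inv_cancel_left, mul_left_comm, Units.mul_inv, mul_one]

section Congruence

variable {Q S : Matrix n n 𝕜}

lemma PosSemidef.inv_mul_mul_inv (hS : S.PosSemidef) (hQ : Q.IsHermitian) :
    (Q⁻¹ * S * Q⁻¹).PosSemidef := by
  simpa [conjTranspose_nonsing_inv, hQ.eq] using hS.conjTranspose_mul_mul_same Q⁻¹

lemma trace_inv_mul_mul_inv_le (hQ : Q.IsHermitian) (hQdet : IsUnit Q.det) (hQQ : 1 ≤ Q * Q)
    (hS : S.PosSemidef) : (Q⁻¹ * S * Q⁻¹).trace ≤ S.trace := by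
  have hcongr : 1 - Q⁻¹ * Q⁻¹ = Q⁻¹ * (Q * Q - 1) * Q⁻¹ := by
    rw [mul_sub, sub_mul, mul_one, ← mul_assoc, nonsing_inv_mul Q hQdet, one_mul,
      mul_nonsing_inv Q hQdet]
  have hle : (1 - Q⁻¹ * Q⁻¹).PosSemidef := hcongr ▸ (le_iff.mp hQQ).inv_mul_mul_inv hQ
  have hgap : S.trace - (Q⁻¹ * S * Q⁻¹).trace = (S * (1 - Q⁻¹ * Q⁻¹)).trace := by
    rw [mul_sub, mul_one, trace_sub, trace_mul_cycle, trace_mul_comm (Q⁻¹ * Q⁻¹)]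
  exact sub_nonneg.mp (hgap ▸ hS.trace_mul_nonneg hle)

lemma PosDef.exists_isHermitian_mul_self_eq {M : Matrix n n 𝕜} (hM : M.PosDef) :
    ∃ Q : Matrix n n 𝕜, Q.IsHermitian ∧ IsUnit Q.det ∧ Q * Q = M := by
  have hsq := CFC.sqrt_mul_sqrt_self M hM.posSemidef.nonneg
  have hdet : IsUnit (CFC.sqrt M).det := by
    refine isUnit_of_mul_isUnit_left (y := (CFC.sqrt M).det) ?_
    rw [← det_mul, hsq, ← isUnit_iff_isUnit_det]
    exact hM.isUnit
  exact ⟨CFC.sqrt M, (CFC.sqrt_nonneg M).posSemidef.1, hdet, hsq⟩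

end Congruence

section Comparison

variable {M S : Matrix n n 𝕜}

lemma PosDef.norm_det_le_norm_det_add (hM : M.PosDef) (hS : S.PosSemidef) :
    ‖M.det‖ ≤ ‖(M + S).det‖ := by
  obtain ⟨Q, hQ, hQdet, rfl⟩ := hM.exists_isHermitian_mul_self_eq
  rw [det_mul_self_add hQdet, norm_mul]
  exact le_mul_of_one_le_right (norm_nonneg _) (hS.inv_mul_mul_inv hQ).one_le_norm_det_one_add

lemma norm_det_add_le_mul_exp_trace (hM : 1 ≤ M) (hS : S.PosSemidef) :
    ‖(M + S).det‖ ≤ ‖M.det‖ * Real.exp (RCLike.re S.trace) := by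
  have hMpos : M.PosDef := by
    simpa using PosDef.one.add_posSemidef (le_iff.mp hM)
  obtain ⟨Q, hQ, hQdet, rfl⟩ := hMpos.exists_isHermitian_mul_self_eq
  rw [det_mul_self_add hQdet, norm_mul]
  gcongr
  calc ‖(1 + Q⁻¹ * S * Q⁻¹).det‖ ≤ Real.exp (RCLike.re (Q⁻¹ * S * Q⁻¹).trace) :=
        (hS.inv_mul_mul_inv hQ).norm_det_one_add_le_exp_trace
    _ ≤ Real.exp (RCLike.re S.trace) :=
        Real.exp_le_exp.mpr (RCLike.re_le_re (trace_inv_mul_mul_inv_le hQ hQdet hM hS))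

lemma PosSemidef.norm_det_one_add_smul_le {A B P : Matrix n n 𝕜} (hA : A.PosSemidef)
    (hB : B.PosSemidef) (hP : P.PosSemidef) (hAP : A ≤ B + P) {γ : ℝ} (hγ : 0 ≤ γ) :
    ‖(1 + (γ : 𝕜) • A).det‖ ≤ ‖(1 + (γ : 𝕜) • B).det‖ * Real.exp (γ * RCLike.re P.trace) := by
  have hγ' : (0 : 𝕜) ≤ γ := RCLike.ofReal_nonneg.mpr hγ
  calc ‖(1 + (γ : 𝕜) • A).det‖
      ≤ ‖(1 + (γ : 𝕜) • A + (γ : 𝕜) • (B + P - A)).det‖ :=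
        (PosDef.one.add_posSemidef (hA.smul hγ')).norm_det_le_norm_det_add
          ((le_iff.mp hAP).smul hγ')
    _ = ‖(1 + (γ : 𝕜) • B + (γ : 𝕜) • P).det‖ := by congr 2; module
    _ ≤ ‖(1 + (γ : 𝕜) • B).det‖ * Real.exp (RCLike.re ((γ : 𝕜) • P).trace) :=
        norm_det_add_le_mul_exp_trace (le_add_of_nonneg_right (hB.smul hγ').nonneg) (hP.smul hγ')
    _ = ‖(1 + (γ : 𝕜) • B).det‖ * Real.exp (γ * RCLike.re P.trace) := by
        rw [trace_smul, smul_eq_mul, RCLike.re_ofReal_mul]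

end Comparison

lemma IsHermitian.exists_le_posSemidef {X : Matrix n n 𝕜} (hX : X.IsHermitian) :
    ∃ P : Matrix n n 𝕜, P.PosSemidef ∧ X ≤ P ∧
      RCLike.re P.trace ≤ √(Fintype.card n) * √(∑ i, ∑ j, ‖X i j‖ ^ 2) := by
  refine ⟨cfc (fun x : ℝ => max x 0) X,
    nonneg_iff_posSemidef.mp (cfc_nonneg fun x _ => le_max_right x 0), ?_, ?_⟩
  · calc X = cfc (fun x : ℝ => x) X := (cfc_id' ℝ X).symm
      _ ≤ cfc (fun x : ℝ => max x 0) X := cfc_mono fun x _ => le_max_left x 0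
  · rw [hX.trace_cfc, ← RCLike.ofReal_sum, RCLike.ofReal_re]
    exact (Finset.sum_le_sum fun i _ => max_le (le_abs_self _) (abs_nonneg _)).trans
      hX.sum_abs_eigenvalues_le

namespace PosSemidef

variable {A B : Matrix n n 𝕜}

lemma log_norm_det_one_add_smul_le (hA : A.PosSemidef) (hB : B.PosSemidef) {γ : ℝ}
    (hγ : 0 ≤ γ) :
    Real.log ‖(1 + (γ : 𝕜) • A).det‖ ≤ Real.log ‖(1 + (γ : 𝕜) • B).det‖ +
      γ * (√(Fintype.card n) * √(∑ i, ∑ j, ‖(A - B) i j‖ ^ 2)) := by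
  have hγ' : (0 : 𝕜) ≤ γ := RCLike.ofReal_nonneg.mpr hγ
  obtain ⟨P, hP, hABP, htr⟩ := (hA.1.sub hB.1).exists_le_posSemidef
  have hdetA := (hA.smul hγ').one_le_norm_det_one_add
  have hdetB := (hB.smul hγ').one_le_norm_det_one_add
  calc Real.log ‖(1 + (γ : 𝕜) • A).det‖
      ≤ Real.log (‖(1 + (γ : 𝕜) • B).det‖ * Real.exp (γ * RCLike.re P.trace)) :=
        Real.log_le_log (by linarith)
          (hA.norm_det_one_add_smul_le hB hP (sub_le_iff_le_add'.mp hABP) hγ)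
    _ = Real.log ‖(1 + (γ : 𝕜) • B).det‖ + γ * RCLike.re P.trace := by
        rw [Real.log_mul (by linarith) (Real.exp_ne_zero _), Real.log_exp]
    _ ≤ _ := by gcongr

lemma abs_log_norm_det_one_add_smul_sub_le (hA : A.PosSemidef) (hB : B.PosSemidef) {γ : ℝ}
    (hγ : 0 ≤ γ) :
    |Real.log ‖(1 + (γ : 𝕜) • A).det‖ - Real.log ‖(1 + (γ : 𝕜) • B).det‖| ≤
      γ * (√(Fintype.card n) * √(∑ i, ∑ j, ‖(A - B) i j‖ ^ 2)) := by
  have hBA : ∑ i, ∑ j, ‖(B - A) i j‖ ^ 2 = ∑ i, ∑ j, ‖(A - B) i j‖ ^ 2 := by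
    simp only [sub_apply, norm_sub_rev]
  have hAB := hA.log_norm_det_one_add_smul_le hB hγ
  have hBA' := hB.log_norm_det_one_add_smul_le hA hγ
  rw [hBA] at hBA'
  rw [abs_sub_le_iff]
  constructor <;> linarith

end PosSemidef

end Matrix

lemma frobNorm_eq_one_div_mul_sqrt_mul_sqrt {m n : ℕ} (X : Matrix (Fin m) (Fin n) ℂ) :
    frobNorm X = 1 / (m : ℝ) * (√m * √(∑ i, ∑ j, ‖X i j‖ ^ 2)) := by
  rw [frobNorm, Real.sqrt_div' _ (Nat.cast_nonneg m), ← mul_assoc, one_div_mul_eq_div,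
    Real.sqrt_div_self', one_div_mul_eq_div]

theorem normalized_logdet_difference_tendsto_zero_general
    (N : ℕ → ℕ)
    (A B : ∀ t, Matrix (Fin (N t)) (Fin (N t)) ℂ)
    (hA : ∀ t, (A t).PosSemidef) (hB : ∀ t, (B t).PosSemidef)
    (hAB : Tendsto (fun t => frobNorm (A t - B t)) atTop (nhds 0))
    (γ : ℝ) (hγ : 0 < γ) :
    Tendsto (fun t => (1 / (N t : ℝ)) *
        |Real.log ‖Matrix.det (1 + (γ : ℂ) • A t)‖ -
          Real.log ‖Matrix.det (1 + (γ : ℂ) • B t)‖|)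
      atTop (nhds 0) := by
  have hbound : ∀ t, (1 / (N t : ℝ)) *
      |Real.log ‖Matrix.det (1 + (γ : ℂ) • A t)‖ - Real.log ‖Matrix.det (1 + (γ : ℂ) • B t)‖|
        ≤ γ * frobNorm (A t - B t) := fun t => by
    rw [frobNorm_eq_one_div_mul_sqrt_mul_sqrt, mul_left_comm]
    gcongr
    simpa using (hA t).abs_log_norm_det_one_add_smul_sub_le (hB t) hγ.le
  exact squeeze_zero (fun t => by positivity) hbound (by simpa using hAB.const_mul γ)

/-- For sequences `(A_t)`, `(B_t)` of `N_t×N_t` positive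
semidefinite Hermitian matrices with `N_t → ∞`, uniformly bounded operator
norms, and `‖A_t − B_t‖_F → 0`, the normalized log-determinant difference
`(1/N_t)·|log det(I + γ A_t) − log det(I + γ B_t)| → 0` for every `γ > 0`.
(The determinants are real and at least one, so we may take the real logarithm
of their absolute values.) -/
theorem normalized_logdet_difference_tendsto_zero
    (N : ℕ → ℕ) (hN : Tendsto (fun t => N t) atTop atTop)
    (A B : ∀ t, Matrix (Fin (N t)) (Fin (N t)) ℂ)
    (hA : ∀ t, (A t).PosSemidef) (hB : ∀ t, (B t).PosSemidef)
    (hbdd : ∃ C : ℝ, ∀ t, opNorm (A t) ≤ C ∧ opNorm (B t) ≤ C)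
    (hAB : Tendsto (fun t => frobNorm (A t - B t)) atTop (nhds 0))
    (γ : ℝ) (hγ : 0 < γ) :
    Tendsto (fun t => (1 / (N t : ℝ)) *
        |Real.log ‖Matrix.det (1 + (γ : ℂ) • A t)‖ -
          Real.log ‖Matrix.det (1 + (γ : ℂ) • B t)‖|)
      atTop (nhds 0) :=
  normalized_logdet_difference_tendsto_zero_general N A B hA hB hAB γ hγ
end
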